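/- arXiv:2301.01834 — 7 statements merged into one kernel-verified Lean document; each statement's English description precedes it below -/
import Mathlib

section
/- For every real number k with k ≠ −1/2, the map g*(k) is birational of bidegree (2,2): there exist homogeneous quadratic polynomials G₀, G₁, G₂ ∈ ℝ[j₀,j₁,j₂] and a nonzero homogeneous cubic μ ∈ ℝ[l₀,r₀,h] such that G₀(u_k, v, w_k) = μ·l₀, G₁(u_k, v, w_k) = μ·r₀ and G₂(u_k, v, w_k) = μ·h as polynomial identities in ℝ[l₀,r₀,h]; moreover there is a nonzero homogeneous cubic ν ∈ ℝ[j₀,j₁,j₂] with u_k(G₀,G₁,G₂) = ν·j₀, v(G₀,G₁,G₂) = ν·j₁ and w_k(G₀,G₁,G₂) = ν·j₂. -/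
open MvPolynomial

noncomputable section

/-- `u k = h² + (k²/2)(l₀+r₀)h + (k²(k²−1)/4)·l₀r₀` in `ℝ[l₀, r₀, h]`,
with `l₀ = X 0`, `r₀ = X 1`, `h = X 2`. -/
def u (k : ℝ) : MvPolynomial (Fin 3) ℝ :=
  (X 2) ^ 2 + C (k ^ 2 / 2) * (X 0 + X 1) * X 2 + C (k ^ 2 * (k ^ 2 - 1) / 4) * (X 0 * X 1)

/-- `v = (l₀ − r₀)·h`. -/
def v : MvPolynomial (Fin 3) ℝ := (X 0 - X 1) * X 2

/-- `w k = u (k+1)`. -/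
def w (k : ℝ) : MvPolynomial (Fin 3) ℝ := u (k + 1)

/-- The homogenized two-sided Krall–Jacobi map `g*(k) = (u_k, v, w_k)`. -/
def gstar (k : ℝ) : Fin 3 → MvPolynomial (Fin 3) ℝ := ![u k, v, w k]

/-- The Jacobian determinant of a triple of polynomials in `ℝ[l₀, r₀, h]`. -/
def jacDet (p : Fin 3 → MvPolynomial (Fin 3) ℝ) : MvPolynomial (Fin 3) ℝ :=
  Matrix.det (Matrix.of fun i j => pderiv j (p i))

/-- `Γ_k = 2(k+1)(k+2)·j₀ + k(k+1)(2k+1)·j₁ − 2(k−1)k·j₂`. -/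
def Γ (k : ℝ) : MvPolynomial (Fin 3) ℝ :=
  C (2 * (k + 1) * (k + 2)) * X 0 + C (k * (k + 1) * (2 * k + 1)) * X 1
    - C (2 * (k - 1) * k) * X 2

/-- `Γ̄_k`, the image of `Γ_k` under the left-right involution `j₁ ↦ −j₁`. -/
def Γbar (k : ℝ) : MvPolynomial (Fin 3) ℝ :=
  C (2 * (k + 1) * (k + 2)) * X 0 - C (k * (k + 1) * (2 * k + 1)) * X 1
    - C (2 * (k - 1) * k) * X 2

end

set_option maxHeartbeats 2000000 in
open MvPolynomial in
/-- For `k ≠ −1/2` the map `g*(k)` is birational of bidegree `(2,2)`. -/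
theorem gstar_birational_bidegree_two_two (k : ℝ) (hk : k ≠ -1/2) :
    ∃ G : Fin 3 → MvPolynomial (Fin 3) ℝ,
      (∀ i, (G i).IsHomogeneous 2) ∧
      (∃ μ : MvPolynomial (Fin 3) ℝ, μ ≠ 0 ∧ μ.IsHomogeneous 3 ∧
        ∀ i : Fin 3, aeval (gstar k) (G i) = μ * X i) ∧
      (∃ ν : MvPolynomial (Fin 3) ℝ, ν ≠ 0 ∧ ν.IsHomogeneous 3 ∧
        ∀ i : Fin 3, aeval G (gstar k i) = ν * X i) := by
  have ht : (2 * k + 1) ≠ 0 := by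
    intro h0; apply hk; linarith
  -- the linear forms P, Q
  set P : MvPolynomial (Fin 3) ℝ :=
    C (2 : ℝ) * (X 2 - X 0) + C (2 * k + 1) * X 1 with hP
  set Q : MvPolynomial (Fin 3) ℝ :=
    C (2 : ℝ) * (X 2 - X 0) - C (2 * k + 1) * X 1 with hQ
  refine ⟨![Γ k * P, Γbar k * Q, C (1/2 : ℝ) * (Γ k * Γbar k)], ?_, ?_, ?_⟩
  · -- homogeneity of G
    have hΓ : (Γ k).IsHomogeneous 1 := by
      unfold Γ
      exact (((isHomogeneous_X _ _).C_mul _).add ((isHomogeneous_X _ _).C_mul _)).sub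
        ((isHomogeneous_X _ _).C_mul _)
    have hΓb : (Γbar k).IsHomogeneous 1 := by
      unfold Γbar
      exact (((isHomogeneous_X _ _).C_mul _).sub ((isHomogeneous_X _ _).C_mul _)).sub
        ((isHomogeneous_X _ _).C_mul _)
    have hPh : P.IsHomogeneous 1 := by
      rw [hP]
      exact (((isHomogeneous_X _ _).sub (isHomogeneous_X _ _)).C_mul _).add
        ((isHomogeneous_X _ _).C_mul _)
    have hQh : Q.IsHomogeneous 1 := by
      rw [hQ]
      exact (((isHomogeneous_X _ _).sub (isHomogeneous_X _ _)).C_mul _).sub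
        ((isHomogeneous_X _ _).C_mul _)
    intro i
    fin_cases i
    · exact hΓ.mul hPh
    · exact hΓb.mul hQh
    · exact (hΓ.mul hΓb).C_mul _
  · -- forward direction with μ
    refine ⟨C (2 * (2 * k + 1) ^ 2) * (X 2 *
        ((C 2 * X 2 + C (k * (k + 1)) * X 0) * (C 2 * X 2 + C (k * (k + 1)) * X 1))),
      ?_, ?_, ?_⟩
    · -- μ ≠ 0
      intro h0
      have hval := congrArg (eval ![(0 : ℝ), 0, 1]) h0
      simp only [map_mul, map_add, eval_C, eval_X, Matrix.cons_val_zero,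
        Matrix.cons_val_one, Matrix.head_cons, Matrix.cons_val_two, Matrix.tail_cons,
        map_zero] at hval
      have h8 : (8 : ℝ) * (2 * k + 1) ^ 2 = 0 := by nlinarith [hval]
      exact pow_ne_zero 2 ht (by nlinarith [h8])
    · -- μ homogeneous of degree 3
      have h1 : ((C 2 * X 2 + C (k * (k + 1)) * X 0 : MvPolynomial (Fin 3) ℝ)).IsHomogeneous 1 :=
        ((isHomogeneous_X _ _).C_mul _).add ((isHomogeneous_X _ _).C_mul _)
      have h2 : ((C 2 * X 2 + C (k * (k + 1)) * X 1 : MvPolynomial (Fin 3) ℝ)).IsHomogeneous 1 :=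
        ((isHomogeneous_X _ _).C_mul _).add ((isHomogeneous_X _ _).C_mul _)
      exact (((isHomogeneous_X _ _).mul (h1.mul h2))).C_mul _
    · -- the three identities G i ∘ g = μ · X i
      intro i
      fin_cases i <;>
      · apply MvPolynomial.funext
        intro x
        simp only [hP, hQ, Γ, Γbar, gstar, u, v, w,
          Fin.zero_eta, Fin.mk_one, Fin.reduceFinMk,
          Matrix.cons_val_zero, Matrix.cons_val_one, Matrix.head_cons, Matrix.cons_val_two,
          Matrix.tail_cons,
          map_add, map_sub, map_mul, map_pow, aeval_X, aeval_C, eval_add, eval_sub,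
          eval_mul, eval_pow, eval_X, eval_C, algebraMap_eq]
        ring
  · -- reverse direction with ν
    refine ⟨C (16*k^3 - 48*k^5 + 32*k^6) * X 2 ^ 3
        + C (-4*k^3 - 32*k^4 - 100*k^5 - 152*k^6 - 112*k^7 - 32*k^8) * (X 1 ^ 2 * X 2)
        + C (80*k^2 + 176*k^3 - 48*k^4 - 176*k^5 - 32*k^6) * (X 0 * X 2 ^ 2)
        + C (-4*k^2 - 36*k^3 - 132*k^4 - 252*k^5 - 264*k^6 - 144*k^7 - 32*k^8) * (X 0 * X 1 ^ 2)
        + C (128*k + 544*k^2 + 752*k^3 + 352*k^4 - 16*k^5 - 32*k^6) * (X 0 ^ 2 * X 2)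
        + C (64 + 384*k + 912*k^2 + 1104*k^3 + 720*k^4 + 240*k^5 + 32*k^6) * X 0 ^ 3,
      ?_, ?_, ?_⟩
    · -- ν ≠ 0 : evaluate at (1, 0, 1), giving 64 (2k+1)^4
      intro h0
      have hval := congrArg (eval ![(1 : ℝ), 0, 1]) h0
      simp only [map_add, map_mul, map_pow, eval_C, eval_X, Matrix.cons_val_zero,
        Matrix.cons_val_one, Matrix.head_cons, Matrix.cons_val_two, Matrix.tail_cons,
        map_zero] at hval
      have h64 : (64 : ℝ) * (2 * k + 1) ^ 4 = 0 := by nlinarith [hval]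
      exact pow_ne_zero 4 ht (by nlinarith [h64, sq_nonneg ((2*k+1)^2)])
    · -- ν homogeneous of degree 3
      have h3 : ∀ i : Fin 3, ((X i : MvPolynomial (Fin 3) ℝ) ^ 3).IsHomogeneous 3 := fun i => by
        simpa using (isHomogeneous_X ℝ i).pow 3
      have h21 : ∀ i j : Fin 3,
          ((X i : MvPolynomial (Fin 3) ℝ) ^ 2 * X j).IsHomogeneous 3 := fun i j => by
        simpa using ((isHomogeneous_X ℝ i).pow 2).mul (isHomogeneous_X ℝ j)
      have h12 : ∀ i j : Fin 3,
          ((X i : MvPolynomial (Fin 3) ℝ) * X j ^ 2).IsHomogeneous 3 := fun i j => by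
        simpa using (isHomogeneous_X ℝ i).mul ((isHomogeneous_X ℝ j).pow 2)
      exact ((((((h3 2).C_mul _).add ((h21 1 2).C_mul _)).add
        (((h12 0 2)).C_mul _)).add (((h12 0 1)).C_mul _)).add
        (((h21 0 2)).C_mul _)).add (((h3 0)).C_mul _)
    · -- the three identities g i ∘ G = ν · j i
      intro i
      fin_cases i <;>
      · apply MvPolynomial.funext
        intro x
        simp only [hP, hQ, Γ, Γbar, gstar, u, v, w,
          Fin.zero_eta, Fin.mk_one, Fin.reduceFinMk,
          Matrix.cons_val_zero, Matrix.cons_val_one, Matrix.head_cons, Matrix.cons_val_two,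
          Matrix.tail_cons,
          map_add, map_sub, map_mul, map_pow, aeval_X, aeval_C, eval_add, eval_sub,
          eval_mul, eval_pow, eval_X, eval_C, algebraMap_eq]
        ring
end

section
/- There exists a nonzero real constant c (independent of k) such that for every real number k the Jacobian determinant of g*(k) satisfies the polynomial identity det Jac(g*(k)) = c·(2k+1)·h·(k(k+1)l₀ + 2h)·(k(k+1)r₀ + 2h) in ℝ[l₀,r₀,h]. In particular the Jacobian determinant is the product of three lines: h = 0, k(k+1)l₀ + 2h = 0 and k(k+1)r₀ + 2h = 0 (the last two being exchanged by the left-right involution l₀ ↔ r₀), and it vanishes identically exactly when k = −1/2. -/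
open MvPolynomial

open MvPolynomial in
/-- The Jacobian determinant of `g*(k)` is the product of the three lines
`h = 0`, `k(k+1)l₀ + 2h = 0` and `k(k+1)r₀ + 2h = 0`, up to a nonzero constant
`c·(2k+1)`; it vanishes identically exactly when `k = −1/2`. -/
theorem jacDet_gstar_factorization :
    ∃ c : ℝ, c ≠ 0 ∧
      (∀ k : ℝ, jacDet (gstar k) =
        C (c * (2 * k + 1)) * X 2 *
          (C (k * (k + 1)) * X 0 + 2 * X 2) *
          (C (k * (k + 1)) * X 1 + 2 * X 2)) ∧
      (∀ k : ℝ, jacDet (gstar k) = 0 ↔ k = -1/2) := by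
  have key : ∀ k : ℝ, jacDet (gstar k) =
      C ((1/2 : ℝ) * (2 * k + 1)) * X 2 *
        (C (k * (k + 1)) * X 0 + 2 * X 2) *
        (C (k * (k + 1)) * X 1 + 2 * X 2) := by
    intro k
    apply MvPolynomial.funext
    intro x
    simp [jacDet, gstar, u, w, v, Matrix.det_fin_three, pderiv_X, Pi.single_apply]
    ring
  refine ⟨1/2, by norm_num, key, fun k => ?_⟩
  constructor
  · intro h0
    have h1 := key k
    rw [h0] at h1
    have h2 := congrArg (eval (fun _ => (1 : ℝ))) h1
    simp only [map_zero, eval_mul, eval_add, eval_C, eval_X, eval_ofNat, map_ofNat] at h2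
    have hq : k * (k + 1) + 2 > 0 := by nlinarith [sq_nonneg (k + 1/2)]
    have h3 : 2 * k + 1 = 0 := by
      rcases lt_trichotomy (2 * k + 1) 0 with h | h | h
      · nlinarith [mul_pos hq hq]
      · exact h
      · nlinarith [mul_pos hq hq]
    linarith
  · intro hk
    rw [key k, hk]
    norm_num
end

section
/- For k = −1/2 the map g*(k) is not birational: the Jacobian determinant of g*(−1/2) is the zero polynomial, and consequently there exist no homogeneous quadratic polynomials G₀, G₁, G₂ ∈ ℝ[j₀,j₁,j₂] and nonzero homogeneous cubic μ ∈ ℝ[l₀,r₀,h] with G₀(u_{−1/2}, v, w_{−1/2}) = μ·l₀, G₁(u_{−1/2}, v, w_{−1/2}) = μ·r₀ and G₂(u_{−1/2}, v, w_{−1/2}) = μ·h. -/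
open MvPolynomial

private lemma eval_aeval' (x : Fin 3 → ℝ) (g : Fin 3 → MvPolynomial (Fin 3) ℝ)
    (P : MvPolynomial (Fin 3) ℝ) :
    eval x (aeval g P) = eval (fun i => eval x (g i)) P := by
  induction P using MvPolynomial.induction_on with
  | C a => simp
  | add p q hp hq => simp only [map_add, hp, hq]
  | mul_X p i hp => simp only [map_mul, hp, aeval_X, eval_X]

private lemma w_eq_u : w (-1/2 : ℝ) = u (-1/2) := by
  unfold w u
  norm_num

open MvPolynomial in
/-- For `k = −1/2` the Jacobian determinant of `g*(k)` is the zero polynomial and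
`g*(−1/2)` admits no quadratic inverse, i.e. it is not birational. -/
theorem gstar_not_birational_at_neg_half :
    jacDet (gstar (-1/2)) = 0 ∧
    ¬ ∃ (G : Fin 3 → MvPolynomial (Fin 3) ℝ) (μ : MvPolynomial (Fin 3) ℝ),
        (∀ i, (G i).IsHomogeneous 2) ∧ μ ≠ 0 ∧ μ.IsHomogeneous 3 ∧
        (∀ i : Fin 3, aeval (gstar (-1/2)) (G i) = μ * X i) := by
  constructor
  · unfold jacDet
    apply Matrix.det_zero_of_row_eq (i := (0 : Fin 3)) (j := 2) (by decide)
    funext j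
    simp [gstar, w_eq_u]
  · rintro ⟨G, μ, hG, hμ, hμ3, hid⟩
    set Q : MvPolynomial (Fin 3) ℝ :=
      (X 0 + X 1 - C (16/3 : ℝ) * X 2) * ((X 2)^2 + ((X 0)^2 - (X 1)^2)^2) with hQdef
    have hQ : Q ≠ 0 := by
      intro h
      have h1 := congrArg (eval ![(1:ℝ), 0, 0]) h
      simp [hQdef] at h1
    obtain ⟨p, hp⟩ : ∃ p : Fin 3 → ℝ, eval p (μ * Q) ≠ 0 := by
      by_contra hc
      push_neg at hc
      exact mul_ne_zero hμ hQ (MvPolynomial.funext fun x => by simp [hc x])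
    rw [map_mul] at hp
    have hpμ : eval p μ ≠ 0 := fun h => hp (by simp [h])
    have hpQ : eval p Q ≠ 0 := fun h => hp (by simp [h])
    set l := p 0 with hl
    set r := p 1 with hr
    set h := p 2 with hh
    set q : Fin 3 → ℝ := ![16*h/3 - r, 16*h/3 - l, h] with hq
    -- the fibre involution: g*(-1/2) takes equal values at p and q
    have hfib : (fun i => eval p (gstar (-1/2) i)) = (fun i => eval q (gstar (-1/2) i)) := by
      funext i
      fin_cases i <;>
        simp [gstar, w_eq_u, u, v, hq, ← hl, ← hr, ← hh] <;> ring
    -- key evaluation identity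
    have key : ∀ i : Fin 3, eval p μ * p i = eval q μ * q i := by
      intro i
      have h1 := congrArg (eval p) (hid i)
      have h2 := congrArg (eval q) (hid i)
      rw [eval_aeval', hfib, ← eval_aeval'] at h1
      rw [h2] at h1
      simpa using h1.symm
    -- unpack Q ≠ 0 at p
    have hQeval : eval p Q = (l + r - 16/3 * h) * (h^2 + (l^2 - r^2)^2) := by
      simp only [hQdef, map_mul, map_add, map_sub, map_pow, eval_X, eval_C, ← hl, ← hr, ← hh]
    have hQp : (l + r - 16/3 * h) * (h^2 + (l^2 - r^2)^2) ≠ 0 := by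
      rw [← hQeval]; exact hpQ
    have hf1 : l + r - 16/3 * h ≠ 0 := fun hz => hQp (by rw [hz]; ring)
    have hf2 : h^2 + (l^2 - r^2)^2 ≠ 0 := fun hz => hQp (by rw [hz]; ring)
    set a := eval p μ with ha
    set b := eval q μ with hb
    have k0 : a * l = b * (16*h/3 - r) := by simpa [hq] using key 0
    have k1 : a * r = b * (16*h/3 - l) := by simpa [hq] using key 1
    have k2 : a * h = b * h := by simpa [hq, ← hh] using key 2
    by_cases hh0 : h = 0
    · -- then l² ≠ r², but the relations force l² = r²
      have hlr : l^2 ≠ r^2 := by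
        intro hz
        exact hf2 (by rw [hh0, hz]; ring)
      rw [hh0] at k0 k1
      have e1 : a * l = -(b * r) := by linarith
      have e2 : a * r = -(b * l) := by linarith
      have e3 : a * l^2 = a * r^2 := by linear_combination l * e1 - r * e2
      exact hlr (mul_left_cancel₀ hpμ e3)
    · have hab : a = b := by
        exact mul_right_cancel₀ hh0 k2
      apply hf1
      rw [hab] at k0
      have hb0 : b ≠ 0 := by rw [← hab]; exact hpμ
      have : l = 16*h/3 - r := mul_left_cancel₀ hb0 k0
      linarith
end

section
/- For every real number k with k ∉ {−1, −1/2, 0}, the map g*(k) is linearly conjugate to the standard quadratic involution: there exist invertible 3×3 real matrices A and B and a nonzero real constant c such that, writing σ(x,y,z) = (yz, xz, xy) and (p,q,r) = B·(l₀,r₀,h)ᵗ, one has the polynomial identities (u_k, v, w_k)ᵗ = c·A·σ(p,q,r)ᵗ in ℝ[l₀,r₀,h]. -/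
open MvPolynomial

noncomputable section
open MvPolynomial

/-- The linear forms `(p,q,r) = B·(l₀,r₀,h)ᵗ` attached to a matrix `B`. -/
def linForm (B : Matrix (Fin 3) (Fin 3) ℝ) (i : Fin 3) : MvPolynomial (Fin 3) ℝ :=
  ∑ j : Fin 3, C (B i j) * X j

/-- The standard quadratic involution `σ(x,y,z) = (yz, xz, xy)` applied to the
linear forms determined by `B`. -/
def sigmaComp (B : Matrix (Fin 3) (Fin 3) ℝ) : Fin 3 → MvPolynomial (Fin 3) ℝ :=
  ![linForm B 1 * linForm B 2, linForm B 0 * linForm B 2, linForm B 0 * linForm B 1]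

end

set_option maxHeartbeats 1600000 in
open MvPolynomial in
/-- For `k ∉ {−1, −1/2, 0}` the map `g*(k)` is linearly conjugate to the standard
quadratic involution: `(u_k, v, w_k)ᵗ = c·A·σ(B·(l₀,r₀,h)ᵗ)`. -/
theorem gstar_conjugate_standard_involution (k : ℝ)
    (hk : k ∉ ({-1, -1/2, 0} : Set ℝ)) :
    ∃ (A B : Matrix (Fin 3) (Fin 3) ℝ) (c : ℝ),
      IsUnit A.det ∧ IsUnit B.det ∧ c ≠ 0 ∧
      ∀ i : Fin 3, gstar k i = C c * ∑ j : Fin 3, C (A i j) * sigmaComp B j := by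
  simp only [Set.mem_insert_iff, Set.mem_singleton_iff, not_or] at hk
  obtain ⟨h1, h2, h0⟩ := hk
  have hk1 : k + 1 ≠ 0 := by intro h; exact h1 (by linarith)
  have hk2 : 2 * k + 1 ≠ 0 := by intro h; exact h2 (by linarith)
  refine ⟨!![(k-1)/(4*(k+1)*(2*k+1)), 1/(2*(k+1)*(2*k+1)), 1/(2*(k+1)*(2*k+1));
             0, -(1/(k*(k+1)*(2*k+1))), 1/(k*(k+1)*(2*k+1));
             (k+2)/(4*k*(2*k+1)), -(1/(2*k*(2*k+1))), -(1/(2*k*(2*k+1)))],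
          !![0, 0, 1; k*(k+1), 0, 2; 0, k*(k+1), 2], 2*k+1, ?_, ?_, hk2, ?_⟩
  · rw [isUnit_iff_ne_zero]
    have : Matrix.det !![(k-1)/(4*(k+1)*(2*k+1)), 1/(2*(k+1)*(2*k+1)), 1/(2*(k+1)*(2*k+1));
             0, -(1/(k*(k+1)*(2*k+1))), 1/(k*(k+1)*(2*k+1));
             (k+2)/(4*k*(2*k+1)), -(1/(2*k*(2*k+1))), -(1/(2*k*(2*k+1)))]
        = 1/(4*k^2*(k+1)^2*(2*k+1)^2) := by
      simp [Matrix.det_fin_three]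
      field_simp [show k * 2 + 1 ≠ 0 by intro h; exact h2 (by linarith)]
      ring
    rw [this]
    exact one_div_ne_zero (by positivity)
  · rw [isUnit_iff_ne_zero]
    have : Matrix.det !![(0:ℝ), 0, 1; k*(k+1), 0, 2; 0, k*(k+1), 2] = (k*(k+1))^2 := by
      simp [Matrix.det_fin_three]; ring
    rw [this]
    positivity
  · intro i
    apply MvPolynomial.funext
    intro x
    fin_cases i <;>
      simp [gstar, u, v, w, sigmaComp, linForm, Fin.sum_univ_three] <;>
      field_simp [show k * 2 + 1 ≠ 0 by intro h; exact h2 (by linarith)] <;>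
      ring
end

section
/- For every real number k with k ∉ {−1, −1/2, 0}, the inverse of g*(k) has the product structure (H·Γ_k : H̄·Γ̄_k : e·Γ_k·Γ̄_k): there exist real numbers a, b, c with linear forms H = a·j₀ + b·j₁ + c·j₂ and H̄ = a·j₀ − b·j₁ + c·j₂, a nonzero real constant e, and a nonzero homogeneous cubic μ ∈ ℝ[l₀,r₀,h], such that substituting (j₀,j₁,j₂) = (u_k, v, w_k) gives the polynomial identities (H·Γ_k)(u_k,v,w_k) = μ·l₀, (H̄·Γ̄_k)(u_k,v,w_k) = μ·r₀ and (e·Γ_k·Γ̄_k)(u_k,v,w_k) = μ·h. -/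
open MvPolynomial

open MvPolynomial in
/-- For `k ∉ {−1, −1/2, 0}` the inverse of `g*(k)` has the product structure
`(H·Γ_k : H̄·Γ̄_k : e·Γ_k·Γ̄_k)` with `H = a·j₀ + b·j₁ + c·j₂` and
`H̄ = a·j₀ − b·j₁ + c·j₂`. -/
theorem gstar_inverse_product_structure (k : ℝ)
    (hk : k ∉ ({-1, -1/2, 0} : Set ℝ)) :
    ∃ (a b c e : ℝ) (μ : MvPolynomial (Fin 3) ℝ),
      e ≠ 0 ∧ μ ≠ 0 ∧ μ.IsHomogeneous 3 ∧
      aeval (gstar k) ((C a * X 0 + C b * X 1 + C c * X 2) * Γ k) = μ * X 0 ∧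
      aeval (gstar k) ((C a * X 0 - C b * X 1 + C c * X 2) * Γbar k) = μ * X 1 ∧
      aeval (gstar k) (C e * Γ k * Γbar k) = μ * X 2 := by
  have hk2 : 2 * k + 1 ≠ 0 := by
    intro h
    apply hk
    right; left
    linarith
  refine ⟨-4, 2 * (2 * k + 1), 4, 1,
    C (4 * (2 * k + 1) ^ 2) * X 2 * (C 2 * X 2 + C (k * (k + 1)) * X 0)
      * (C 2 * X 2 + C (k * (k + 1)) * X 1),
    one_ne_zero, ?_, ?_, ?_, ?_, ?_⟩
  · intro h
    have := congrArg (eval ![(0 : ℝ), 0, 1]) h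
    simp at this
    exact hk2 (by nlinarith [sq_nonneg (2 * k + 1)])
  · have hC0 : (C (4 * (2 * k + 1) ^ 2) : MvPolynomial (Fin 3) ℝ).IsHomogeneous 0 :=
      isHomogeneous_C _ _
    have hX2 : (X 2 : MvPolynomial (Fin 3) ℝ).IsHomogeneous 1 := isHomogeneous_X _ _
    have h1 : (C 2 * X 2 + C (k * (k + 1)) * X 0 : MvPolynomial (Fin 3) ℝ).IsHomogeneous 1 :=
      ((isHomogeneous_C _ _).mul (isHomogeneous_X _ _)).add
        ((isHomogeneous_C _ _).mul (isHomogeneous_X _ _))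
    have h2 : (C 2 * X 2 + C (k * (k + 1)) * X 1 : MvPolynomial (Fin 3) ℝ).IsHomogeneous 1 :=
      ((isHomogeneous_C _ _).mul (isHomogeneous_X _ _)).add
        ((isHomogeneous_C _ _).mul (isHomogeneous_X _ _))
    have := ((hC0.mul hX2).mul h1).mul h2
    simpa using this
  all_goals
    apply MvPolynomial.funext
    intro x
    simp [gstar, Γ, Γbar, u, v, w]
    ring
end

section
/- Let k be a real number with k ∉ {−1, −1/2, 0} and let (G₀, G₁, G₂) be any triple of homogeneous quadratic polynomials in ℝ[j₀,j₁,j₂] that inverts g*(k), i.e. G₀(u_k,v,w_k) = μ·l₀, G₁(u_k,v,w_k) = μ·r₀, G₂(u_k,v,w_k) = μ·h for some nonzero homogeneous cubic μ. Then there is a nonzero real constant c such that the Jacobian determinant of (G₀,G₁,G₂) with respect to (j₀,j₁,j₂) equals c·((k+1)·j₀ + k·j₂)·Γ_k·Γ̄_k, i.e. it is the product of three lines, the last two of which are exchanged by the left-right involution j₁ ↦ −j₁. -/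
open MvPolynomial

noncomputable section KJaux

namespace KJaux

open MvPolynomial

/-! ### Generalities -/

lemma prime_X_i (i : Fin 3) : Prime (X i : MvPolynomial (Fin 3) ℝ) := by
  have h0 : Prime (X 0 : MvPolynomial (Fin 3) ℝ) := by
    rw [← MulEquiv.prime_iff (MvPolynomial.finSuccEquiv ℝ 2).toMulEquiv
      (p := (X 0 : MvPolynomial (Fin 3) ℝ))]
    have : (MvPolynomial.finSuccEquiv ℝ 2).toMulEquiv (X 0 : MvPolynomial (Fin 3) ℝ)
        = Polynomial.X := by simpa using finSuccEquiv_X_zero (R := ℝ) (n := 2)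
    rw [this]; exact Polynomial.prime_X
  rw [← MulEquiv.prime_iff (renameEquiv ℝ (Equiv.swap (0 : Fin 3) i)).toMulEquiv] at h0
  simpa [Equiv.swap_apply_left] using h0

/-- A linear form with nonzero middle coefficient is prime. -/
lemma prime_lin1 (a b c : ℝ) (hb : b ≠ 0) :
    Prime (C a * X 0 + C b * X 1 + C c * X 2 : MvPolynomial (Fin 3) ℝ) := by
  set f : Fin 3 → MvPolynomial (Fin 3) ℝ := ![X 0, C a * X 0 + C b * X 1 + C c * X 2, X 2]
    with hf
  set g : Fin 3 → MvPolynomial (Fin 3) ℝ :=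
    ![X 0, C b⁻¹ * (X 1 - C a * X 0 - C c * X 2), X 2] with hg
  have hfg : (aeval f).comp (aeval g) = AlgHom.id ℝ (MvPolynomial (Fin 3) ℝ) := by
    apply MvPolynomial.algHom_ext
    intro i
    fin_cases i <;>
      simp only [AlgHom.coe_comp, Function.comp_apply, AlgHom.id_apply, Fin.zero_eta, Fin.mk_one, Fin.reduceFinMk,
        hf, hg, aeval_X, Matrix.cons_val_zero, Matrix.cons_val_one, Matrix.head_cons,
        Matrix.cons_val_two, Matrix.tail_cons,
        map_mul, map_sub, map_add, aeval_C, aeval_X, algebraMap_eq]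
    · rw [show (C a * X 0 + C b * X 1 + C c * X 2 - C a * X 0 - C c * X 2 :
          MvPolynomial (Fin 3) ℝ) = C b * X 1 from by ring,
        ← mul_assoc, ← C_mul, inv_mul_cancel₀ hb, C_1, one_mul]
  have hgf : (aeval g).comp (aeval f) = AlgHom.id ℝ (MvPolynomial (Fin 3) ℝ) := by
    apply MvPolynomial.algHom_ext
    intro i
    fin_cases i <;>
      simp only [AlgHom.coe_comp, Function.comp_apply, AlgHom.id_apply, Fin.zero_eta, Fin.mk_one, Fin.reduceFinMk,
        hf, hg, aeval_X, Matrix.cons_val_zero, Matrix.cons_val_one, Matrix.head_cons,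
        Matrix.cons_val_two, Matrix.tail_cons,
        map_mul, map_sub, map_add, aeval_C, aeval_X, algebraMap_eq]
    · rw [← mul_assoc (C b), ← C_mul, mul_inv_cancel₀ hb, C_1, one_mul]
      ring
  let e : MvPolynomial (Fin 3) ℝ ≃ₐ[ℝ] MvPolynomial (Fin 3) ℝ :=
    AlgEquiv.ofAlgHom (aeval f) (aeval g) hfg hgf
  have := (MulEquiv.prime_iff e.toMulEquiv (p := (X 1 : MvPolynomial (Fin 3) ℝ))).mpr (prime_X_i 1)
  simpa [e, hf, AlgEquiv.ofAlgHom] using this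

/-- A linear form in `X 0`, `X 2` with nonzero `X 0` coefficient is prime. -/
lemma prime_lin0 (a c : ℝ) (ha : a ≠ 0) :
    Prime (C a * X 0 + C c * X 2 : MvPolynomial (Fin 3) ℝ) := by
  set f : Fin 3 → MvPolynomial (Fin 3) ℝ := ![C a * X 0 + C c * X 2, X 1, X 2] with hf
  set g : Fin 3 → MvPolynomial (Fin 3) ℝ :=
    ![C a⁻¹ * (X 0 - C c * X 2), X 1, X 2] with hg
  have hfg : (aeval f).comp (aeval g) = AlgHom.id ℝ (MvPolynomial (Fin 3) ℝ) := by
    apply MvPolynomial.algHom_ext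
    intro i
    fin_cases i <;>
      simp only [AlgHom.coe_comp, Function.comp_apply, AlgHom.id_apply, Fin.zero_eta, Fin.mk_one, Fin.reduceFinMk,
        hf, hg, aeval_X, Matrix.cons_val_zero, Matrix.cons_val_one, Matrix.head_cons,
        Matrix.cons_val_two, Matrix.tail_cons,
        map_mul, map_sub, map_add, aeval_C, aeval_X, algebraMap_eq]
    · rw [show (C a * X 0 + C c * X 2 - C c * X 2 :
          MvPolynomial (Fin 3) ℝ) = C a * X 0 from by ring,
        ← mul_assoc, ← C_mul, inv_mul_cancel₀ ha, C_1, one_mul]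
  have hgf : (aeval g).comp (aeval f) = AlgHom.id ℝ (MvPolynomial (Fin 3) ℝ) := by
    apply MvPolynomial.algHom_ext
    intro i
    fin_cases i <;>
      simp only [AlgHom.coe_comp, Function.comp_apply, AlgHom.id_apply, Fin.zero_eta, Fin.mk_one, Fin.reduceFinMk,
        hf, hg, aeval_X, Matrix.cons_val_zero, Matrix.cons_val_one, Matrix.head_cons,
        Matrix.cons_val_two, Matrix.tail_cons,
        map_mul, map_sub, map_add, aeval_C, aeval_X, algebraMap_eq]
    · rw [← mul_assoc (C a), ← C_mul, mul_inv_cancel₀ ha, C_1, one_mul]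
      ring
  let e : MvPolynomial (Fin 3) ℝ ≃ₐ[ℝ] MvPolynomial (Fin 3) ℝ :=
    AlgEquiv.ofAlgHom (aeval f) (aeval g) hfg hgf
  have := (MulEquiv.prime_iff e.toMulEquiv (p := (X 0 : MvPolynomial (Fin 3) ℝ))).mpr (prime_X_i 0)
  simpa [e, hf, AlgEquiv.ofAlgHom] using this

/-- Substituting `X i ↦ s * X i` into a homogeneous polynomial of degree `n`
multiplies it by `s ^ n`. -/
lemma aeval_scale {s p : MvPolynomial (Fin 3) ℝ} {n : ℕ} (hp : p.IsHomogeneous n) :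
    aeval (fun i => s * X i) p = s ^ n * p := by
  have key : ∀ d ∈ p.support,
      (aeval (fun i => s * X i)) (monomial d (coeff d p)) = s ^ n * monomial d (coeff d p) := by
    intro d hd
    have hdeg : d.degree = n := by
      by_contra hne
      exact mem_support_iff.mp hd (hp.coeff_eq_zero hne)
    rw [aeval_monomial, monomial_eq, algebraMap_eq]
    simp only [Finsupp.prod, mul_pow]
    rw [Finset.prod_mul_distrib, Finset.prod_pow_eq_pow_sum,
      show ∑ i ∈ d.support, d i = n from hdeg]
    ring
  conv_lhs => rw [← support_sum_monomial_coeff p]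
  rw [map_sum, Finset.sum_congr rfl key, ← Finset.mul_sum, support_sum_monomial_coeff]

/-- If `t * q` is homogeneous of the same degree as the nonzero homogeneous
polynomial `q`, then `t` is a constant. -/
lemma eq_C_of_mul_isHomogeneous {t q : MvPolynomial (Fin 3) ℝ} {m : ℕ}
    (hq : q.IsHomogeneous m) (hq0 : q ≠ 0) (h : (t * q).IsHomogeneous m) :
    t = C (coeff 0 t) := by
  have hcomp : ∀ i, i ≠ 0 → homogeneousComponent i t = 0 := by
    intro i hi
    rcases lt_or_ge t.totalDegree i with hgt | hle
    · exact homogeneousComponent_eq_zero i t hgt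
    · have hmem : ∀ j, (homogeneousComponent j t * q) ∈ homogeneousSubmodule (Fin 3) ℝ (j + m) :=
        fun j => (mem_homogeneousSubmodule _ _).mpr
          ((homogeneousComponent_isHomogeneous j t).mul hq)
      have h2 : homogeneousComponent (i + m) (t * q) = 0 := by
        rw [homogeneousComponent_of_mem ((mem_homogeneousSubmodule _ _).mpr h),
          if_neg (by omega)]
      have h3 : homogeneousComponent (i + m) (t * q) = homogeneousComponent i t * q := by
        conv_lhs => rw [← sum_homogeneousComponent t, Finset.sum_mul, map_sum]
        rw [Finset.sum_eq_single_of_mem i (Finset.mem_range.mpr (Nat.lt_succ_of_le hle))]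
        · rw [homogeneousComponent_of_mem (hmem i), if_pos rfl]
        · intro j _ hji
          rw [homogeneousComponent_of_mem (hmem j), if_neg (by omega)]
      have h4 : homogeneousComponent i t * q = 0 := h3.symm.trans h2
      exact (mul_eq_zero.mp h4).resolve_right hq0
  conv_lhs => rw [← sum_homogeneousComponent t]
  rw [Finset.sum_eq_single_of_mem 0 (Finset.mem_range.mpr (Nat.succ_pos _))]
  · exact homogeneousComponent_zero t
  · intro j _ hj; exact hcomp j hj

/-! ### The explicit quadratic inverse of `g*(k)` -/

/-- The line `(k+1)j₀ + kj₂`. -/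
def L1 (k : ℝ) : MvPolynomial (Fin 3) ℝ := C (k + 1) * X 0 + C k * X 2

/-- The explicit quadratic inverse of `gstar k`. -/
def Gp (k : ℝ) : Fin 3 → MvPolynomial (Fin 3) ℝ :=
  ![C (-2*(k+1)*(k+2)) * X 0^2 + C (2*(k+1)*(2*k+1)) * (X 0 * X 1)
      + C (4*(k^2+k+1)) * (X 0 * X 2) + C (k*(k+1)*(2*k+1)^2/2) * X 1^2
      + C (2*k*(2*k+1)) * (X 1 * X 2) + C (-2*k*(k-1)) * X 2^2,
    C (-2*(k+1)*(k+2)) * X 0^2 - C (2*(k+1)*(2*k+1)) * (X 0 * X 1)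
      + C (4*(k^2+k+1)) * (X 0 * X 2) + C (k*(k+1)*(2*k+1)^2/2) * X 1^2
      - C (2*k*(2*k+1)) * (X 1 * X 2) + C (-2*k*(k-1)) * X 2^2,
    C ((k+1)^2*(k+2)^2) * X 0^2 + C (-2*k*(k+1)*(k-1)*(k+2)) * (X 0 * X 2)
      + C (-(k^2*(k+1)^2*(2*k+1)^2/4)) * X 1^2 + C (k^2*(k-1)^2) * X 2^2]

/-- The cubic `ν k` with `gstar k ∘ Gp k = ν k • id`. -/
def ν (k : ℝ) : MvPolynomial (Fin 3) ℝ := C (2*k+1) * L1 k * Γ k * Γbar k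

lemma Gp_0 (k : ℝ) : Gp k 0 = C (-2*(k+1)*(k+2)) * X 0^2 + C (2*(k+1)*(2*k+1)) * (X 0 * X 1)
      + C (4*(k^2+k+1)) * (X 0 * X 2) + C (k*(k+1)*(2*k+1)^2/2) * X 1^2
      + C (2*k*(2*k+1)) * (X 1 * X 2) + C (-2*k*(k-1)) * X 2^2 := rfl
lemma Gp_1 (k : ℝ) : Gp k 1 = C (-2*(k+1)*(k+2)) * X 0^2 - C (2*(k+1)*(2*k+1)) * (X 0 * X 1)
      + C (4*(k^2+k+1)) * (X 0 * X 2) + C (k*(k+1)*(2*k+1)^2/2) * X 1^2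
      - C (2*k*(2*k+1)) * (X 1 * X 2) + C (-2*k*(k-1)) * X 2^2 := rfl
lemma Gp_2 (k : ℝ) : Gp k 2 = C ((k+1)^2*(k+2)^2) * X 0^2
      + C (-2*k*(k+1)*(k-1)*(k+2)) * (X 0 * X 2)
      + C (-(k^2*(k+1)^2*(2*k+1)^2/4)) * X 1^2 + C (k^2*(k-1)^2) * X 2^2 := rfl

set_option maxHeartbeats 2000000 in
lemma comp_u (k : ℝ) : aeval (Gp k) (u k) = ν k * X 0 := by
  apply MvPolynomial.funext
  intro x
  simp only [u, ν, L1, Γ, Γbar, map_add, map_mul, map_pow, map_sub, aeval_X, aeval_C,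
    algebraMap_eq, Gp_0, Gp_1, Gp_2, eval_add, eval_mul, eval_pow, eval_sub, eval_X, eval_C]
  ring

set_option maxHeartbeats 2000000 in
lemma comp_v (k : ℝ) : aeval (Gp k) v = ν k * X 1 := by
  apply MvPolynomial.funext
  intro x
  simp only [v, ν, L1, Γ, Γbar, map_add, map_mul, map_pow, map_sub, aeval_X, aeval_C,
    algebraMap_eq, Gp_0, Gp_1, Gp_2, eval_add, eval_mul, eval_pow, eval_sub, eval_X, eval_C]
  ring

set_option maxHeartbeats 2000000 in
lemma comp_w (k : ℝ) : aeval (Gp k) (w k) = ν k * X 2 := by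
  apply MvPolynomial.funext
  intro x
  simp only [w, u, ν, L1, Γ, Γbar, map_add, map_mul, map_pow, map_sub, aeval_X, aeval_C,
    algebraMap_eq, Gp_0, Gp_1, Gp_2, eval_add, eval_mul, eval_pow, eval_sub, eval_X, eval_C]
  ring

set_option maxHeartbeats 4000000 in
/-- The key explicit computation: the Jacobian determinant of the inverse `Gp k`. -/
lemma jacGp (k : ℝ) : jacDet (Gp k) = C (8*(2*k+1)^2) * L1 k * Γ k * Γbar k := by
  unfold jacDet
  rw [Matrix.det_fin_three]
  simp only [Matrix.of_apply, Gp_0, Gp_1, Gp_2, map_add, map_sub, pderiv_C_mul, pderiv_mul,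
    pderiv_pow, pderiv_X]
  apply MvPolynomial.funext
  intro x
  simp [L1, Γ, Γbar]
  ring

end KJaux

end KJaux

open MvPolynomial in
/-- For `k ∉ {−1, −1/2, 0}`, the Jacobian determinant of any quadratic inverse
`(G₀, G₁, G₂)` of `g*(k)` is, up to a nonzero constant, the product of the three
lines `(k+1)j₀ + kj₂ = 0`, `Γ_k = 0` and `Γ̄_k = 0`. -/
theorem jacDet_inverse_factorization (k : ℝ)
    (hk : k ∉ ({-1, -1/2, 0} : Set ℝ))
    (G : Fin 3 → MvPolynomial (Fin 3) ℝ) (μ : MvPolynomial (Fin 3) ℝ)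
    (hG : ∀ i, (G i).IsHomogeneous 2) (hμ : μ ≠ 0) (hμ3 : μ.IsHomogeneous 3)
    (hinv : ∀ i : Fin 3, aeval (gstar k) (G i) = μ * X i) :
    ∃ c : ℝ, c ≠ 0 ∧
      jacDet G = C c * (C (k + 1) * X 0 + C k * X 2) * Γ k * Γbar k := by
  classical
  open KJaux in
  simp only [Set.mem_insert_iff, Set.mem_singleton_iff, not_or] at hk
  obtain ⟨hkm1, hkm12, hk0⟩ := hk
  have hk1 : k + 1 ≠ 0 := fun h => hkm1 (by linarith)
  have h2k1 : 2 * k + 1 ≠ 0 := fun h => hkm12 (by linarith)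
  -- the composition `gstar k ∘ Gp k` is `ν k • id`
  have hcomp : ∀ j : Fin 3, aeval (KJaux.Gp k) (gstar k j) = KJaux.ν k * X j := by
    intro j
    fin_cases j
    · exact KJaux.comp_u k
    · exact KJaux.comp_v k
    · exact KJaux.comp_w k
  -- the fundamental relation `ν² * G i = M * Gp i`
  set M : MvPolynomial (Fin 3) ℝ := aeval (KJaux.Gp k) μ with hMdef
  have key : ∀ i, KJaux.ν k ^ 2 * G i = M * KJaux.Gp k i := by
    intro i
    have h1 := congrArg (aeval (KJaux.Gp k)) (hinv i)
    rw [map_mul, aeval_X, comp_aeval_apply,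
      show (fun j => aeval (KJaux.Gp k) (gstar k j)) = fun j => KJaux.ν k * X j from
        funext hcomp, KJaux.aeval_scale (hG i)] at h1
    exact h1
  -- the three lines are prime
  have hpL : Prime (KJaux.L1 k) := KJaux.prime_lin0 (k + 1) k hk1
  have hbne : k * (k + 1) * (2 * k + 1) ≠ 0 := mul_ne_zero (mul_ne_zero hk0 hk1) h2k1
  have hpΓ : Prime (Γ k) := by
    have h := KJaux.prime_lin1 (2 * (k + 1) * (k + 2)) (k * (k + 1) * (2 * k + 1))
      (-(2 * (k - 1) * k)) hbne
    have heq : C (2 * (k + 1) * (k + 2)) * X 0 + C (k * (k + 1) * (2 * k + 1)) * X 1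
        + C (-(2 * (k - 1) * k)) * X 2 = Γ k := by
      rw [Γ, map_neg]; ring
    rwa [heq] at h
  have hpΓb : Prime (Γbar k) := by
    have h := KJaux.prime_lin1 (2 * (k + 1) * (k + 2)) (-(k * (k + 1) * (2 * k + 1)))
      (-(2 * (k - 1) * k)) (neg_ne_zero.mpr hbne)
    have heq : C (2 * (k + 1) * (k + 2)) * X 0 + C (-(k * (k + 1) * (2 * k + 1))) * X 1
        + C (-(2 * (k - 1) * k)) * X 2 = Γbar k := by
      rw [Γbar, map_neg, map_neg]; ring
    rwa [heq] at h
  -- non-divisibility witnesses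
  have hndL : ¬ KJaux.L1 k ∣ KJaux.Gp k 2 := by
    rintro ⟨t, ht⟩
    have h1 : eval ![k, 0, -(k+1)] (KJaux.Gp k 2) = (k * (k+1) * (2*k+1))^2 := by
      rw [KJaux.Gp_2]; simp; ring
    rw [ht, eval_mul, show eval ![k, 0, -(k+1)] (KJaux.L1 k) = 0 from by
      simp [KJaux.L1]; ring, zero_mul] at h1
    exact pow_ne_zero 2 hbne h1.symm
  have hndΓ : ¬ Γ k ∣ KJaux.Gp k 1 := by
    rintro ⟨t, ht⟩
    have h1 : eval ![k*(k+1), -4, k*(k+1)] (KJaux.Gp k 1) = 16 * (k * (k+1)) * (2*k+1)^2 := by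
      rw [KJaux.Gp_1]; simp; ring
    rw [ht, eval_mul, show eval ![k*(k+1), -4, k*(k+1)] (Γ k) = 0 from by
      simp [Γ]; ring, zero_mul] at h1
    exact mul_ne_zero (mul_ne_zero (by norm_num) (mul_ne_zero hk0 hk1))
      (pow_ne_zero 2 h2k1) h1.symm
  have hndΓb : ¬ Γbar k ∣ KJaux.Gp k 0 := by
    rintro ⟨t, ht⟩
    have h1 : eval ![k*(k+1), 4, k*(k+1)] (KJaux.Gp k 0) = 16 * (k * (k+1)) * (2*k+1)^2 := by
      rw [KJaux.Gp_0]; simp; ring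
    rw [ht, eval_mul, show eval ![k*(k+1), 4, k*(k+1)] (Γbar k) = 0 from by
      simp [Γbar]; ring, zero_mul] at h1
    exact mul_ne_zero (mul_ne_zero (by norm_num) (mul_ne_zero hk0 hk1))
      (pow_ne_zero 2 h2k1) h1.symm
  have hndΓL : ¬ Γ k ∣ KJaux.L1 k := by
    rintro ⟨t, ht⟩
    have h1 : eval ![k*(k+1), -4, k*(k+1)] (KJaux.L1 k) = k * (k+1) * (2*k+1) := by
      simp [KJaux.L1]; ring
    rw [ht, eval_mul, show eval ![k*(k+1), -4, k*(k+1)] (Γ k) = 0 from by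
      simp [Γ]; ring, zero_mul] at h1
    exact hbne h1.symm
  have hndΓbL : ¬ Γbar k ∣ KJaux.L1 k := by
    rintro ⟨t, ht⟩
    have h1 : eval ![k*(k+1), 4, k*(k+1)] (KJaux.L1 k) = k * (k+1) * (2*k+1) := by
      simp [KJaux.L1]; ring
    rw [ht, eval_mul, show eval ![k*(k+1), 4, k*(k+1)] (Γbar k) = 0 from by
      simp [Γbar]; ring, zero_mul] at h1
    exact hbne h1.symm
  have hndΓbΓ : ¬ Γbar k ∣ Γ k := by
    rintro ⟨t, ht⟩
    have h1 : eval ![k*(k+1), 4, k*(k+1)] (Γ k) = 8 * (k * (k+1)) * (2*k+1) := by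
      simp [Γ]; ring
    rw [ht, eval_mul, show eval ![k*(k+1), 4, k*(k+1)] (Γbar k) = 0 from by
      simp [Γbar]; ring, zero_mul] at h1
    exact mul_ne_zero (mul_ne_zero (by norm_num) (mul_ne_zero hk0 hk1)) h2k1 h1.symm
  -- `ν` divisibilities
  have hLν : KJaux.L1 k ∣ KJaux.ν k :=
    ⟨C (2*k+1) * Γ k * Γbar k, by simp only [KJaux.ν]; ring⟩
  have hΓν : Γ k ∣ KJaux.ν k :=
    ⟨C (2*k+1) * KJaux.L1 k * Γbar k, by simp only [KJaux.ν]; ring⟩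
  have hΓbν : Γbar k ∣ KJaux.ν k :=
    ⟨C (2*k+1) * KJaux.L1 k * Γ k, by simp only [KJaux.ν]; ring⟩
  -- extract the square of each line from `M`
  have hdvd1 : KJaux.L1 k ^ 2 ∣ M := by
    apply hpL.pow_dvd_of_dvd_mul_right 2 hndL
    rw [← key 2]
    exact dvd_mul_of_dvd_left (pow_dvd_pow_of_dvd hLν 2) _
  obtain ⟨M1, hM1⟩ := hdvd1
  have hdvd2 : Γ k ^ 2 ∣ M1 := by
    apply hpΓ.pow_dvd_of_dvd_mul_left 2
      (show ¬ Γ k ∣ KJaux.L1 k ^ 2 * KJaux.Gp k 1 from ?_)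
    · rw [show KJaux.L1 k ^ 2 * KJaux.Gp k 1 * M1 = KJaux.ν k ^ 2 * G 1 from by
        linear_combination (-1 : MvPolynomial (Fin 3) ℝ) * key 1 - KJaux.Gp k 1 * hM1]
      exact dvd_mul_of_dvd_left (pow_dvd_pow_of_dvd hΓν 2) _
    · intro hd
      rcases hpΓ.dvd_mul.mp hd with h | h
      · exact hndΓL (hpΓ.dvd_of_dvd_pow h)
      · exact hndΓ h
  obtain ⟨M2, hM2⟩ := hdvd2
  have hdvd3 : Γbar k ^ 2 ∣ M2 := by
    apply hpΓb.pow_dvd_of_dvd_mul_left 2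
      (show ¬ Γbar k ∣ KJaux.L1 k ^ 2 * Γ k ^ 2 * KJaux.Gp k 0 from ?_)
    · rw [show KJaux.L1 k ^ 2 * Γ k ^ 2 * KJaux.Gp k 0 * M2 = KJaux.ν k ^ 2 * G 0 from by
        linear_combination (-1 : MvPolynomial (Fin 3) ℝ) * key 0 - KJaux.Gp k 0 * hM1
          - KJaux.L1 k ^ 2 * KJaux.Gp k 0 * hM2]
      exact dvd_mul_of_dvd_left (pow_dvd_pow_of_dvd hΓbν 2) _
    · intro hd
      rcases hpΓb.dvd_mul.mp hd with h | h
      · rcases hpΓb.dvd_mul.mp h with h2 | h2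
        · exact hndΓbL (hpΓb.dvd_of_dvd_pow h2)
        · exact hndΓbΓ (hpΓb.dvd_of_dvd_pow h2)
      · exact hndΓb h
  obtain ⟨M3, hM3⟩ := hdvd3
  -- cancel the common `L1² Γ² Γbar²` factor
  have hν2 : KJaux.ν k ^ 2
      = C ((2*k+1)^2) * (KJaux.L1 k ^ 2 * Γ k ^ 2 * Γbar k ^ 2) := by
    rw [show (C ((2*k+1)^2) : MvPolynomial (Fin 3) ℝ) = C (2*k+1) ^ 2 from map_pow _ _ _]
    simp only [KJaux.ν]; ring
  have hprodne : (KJaux.L1 k ^ 2 * Γ k ^ 2 * Γbar k ^ 2 : MvPolynomial (Fin 3) ℝ) ≠ 0 :=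
    mul_ne_zero (mul_ne_zero (pow_ne_zero _ hpL.ne_zero) (pow_ne_zero _ hpΓ.ne_zero))
      (pow_ne_zero _ hpΓb.ne_zero)
  have key2 : ∀ i, C ((2*k+1)^2) * G i = M3 * KJaux.Gp k i := by
    intro i
    apply mul_left_cancel₀ hprodne
    have h1 := key i
    rw [hM1, hM2, hM3, hν2] at h1
    linear_combination h1
  -- `G 2 ≠ 0`
  have hG2 : G 2 ≠ 0 := by
    intro h0
    have h1 := hinv 2
    rw [h0, map_zero] at h1
    exact mul_ne_zero hμ (X_ne_zero (2 : Fin 3)) h1.symm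
  -- `Gp k 2` is homogeneous of degree 2 and nonzero
  have hX2 : ∀ (r : ℝ) (i j : Fin 3),
      (C r * (X i * X j) : MvPolynomial (Fin 3) ℝ).IsHomogeneous 2 := fun r i j => by
    simpa using ((isHomogeneous_X ℝ i).mul (isHomogeneous_X ℝ j)).C_mul r
  have hXp2 : ∀ (r : ℝ) (i : Fin 3),
      (C r * X i ^ 2 : MvPolynomial (Fin 3) ℝ).IsHomogeneous 2 := fun r i => by
    simpa using ((isHomogeneous_X ℝ i).pow 2).C_mul r
  have hGp2h : (KJaux.Gp k 2).IsHomogeneous 2 := by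
    rw [KJaux.Gp_2]
    exact (((hXp2 _ 0).add (hX2 _ 0 2)).add (hXp2 _ 1)).add (hXp2 _ 2)
  have hGp2ne : KJaux.Gp k 2 ≠ 0 := fun h0 => hndL (h0 ▸ dvd_zero _)
  -- hence `M3` is a constant
  have hhom2 : (M3 * KJaux.Gp k 2).IsHomogeneous 2 := by
    rw [← key2 2]
    exact (hG 2).C_mul ((2*k+1)^2)
  have hM3C : M3 = C (coeff 0 M3) := KJaux.eq_C_of_mul_isHomogeneous hGp2h hGp2ne hhom2
  set c0 : ℝ := coeff 0 M3 / (2*k+1)^2 with hc0def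
  have ha2 : ((2*k+1)^2 : ℝ) ≠ 0 := pow_ne_zero _ h2k1
  have hCa2 : (C ((2*k+1)^2) : MvPolynomial (Fin 3) ℝ) ≠ 0 := fun h =>
    ha2 (by rw [← C_0] at h; exact C_injective _ _ h)
  have hGi : ∀ i, G i = C c0 * KJaux.Gp k i := by
    intro i
    apply mul_left_cancel₀ hCa2
    rw [key2 i, hM3C, ← mul_assoc, ← C_mul, hc0def,
      show (2*k+1)^2 * (coeff 0 M3 / (2*k+1)^2) = coeff 0 M3 from by field_simp]
  have hc0 : c0 ≠ 0 := by
    intro h0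
    apply hG2
    rw [hGi 2, h0, map_zero, zero_mul]
  -- assemble the Jacobian
  refine ⟨c0 ^ 3 * (8*(2*k+1)^2), mul_ne_zero (pow_ne_zero _ hc0)
    (mul_ne_zero (by norm_num) ha2), ?_⟩
  have hmat : (Matrix.of fun i j => pderiv j (G i))
      = (C c0 : MvPolynomial (Fin 3) ℝ) • (Matrix.of fun i j => pderiv j (KJaux.Gp k i)) := by
    ext i j
    simp [hGi i, pderiv_C_mul]
  have hdet : jacDet G = C c0 ^ 3 * jacDet (KJaux.Gp k) := by
    unfold jacDet
    rw [hmat, Matrix.det_smul]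
    norm_num
  rw [hdet, KJaux.jacGp k,
    show (C (c0 ^ 3 * (8*(2*k+1)^2)) : MvPolynomial (Fin 3) ℝ)
      = C c0 ^ 3 * C (8*(2*k+1)^2) from by rw [C_mul, ← map_pow],
    show (C (k + 1) * X 0 + C k * X 2 : MvPolynomial (Fin 3) ℝ) = KJaux.L1 k from rfl]
  ring
end

section
/- Let k be a real number with k ∉ {−1, −1/2, 0}. If (G₀,G₁,G₂) and (G₀′,G₁′,G₂′) are two triples of homogeneous quadratic polynomials in ℝ[j₀,j₁,j₂] such that G_i(u_k,v,w_k) = μ·x_i and G_i′(u_k,v,w_k) = μ′·x_i for i = 0,1,2, where (x₀,x₁,x₂) = (l₀,r₀,h) and μ, μ′ are nonzero homogeneous cubics in ℝ[l₀,r₀,h], then the two inverse triples are proportional: there exists a nonzero real number λ with G_i′ = λ·G_i for i = 0,1,2. -/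
open MvPolynomial

noncomputable section KJaux

open MvPolynomial

local notation "R3" => MvPolynomial (Fin 3) ℝ

/-- `X 1` is prime in `ℝ[x₀,x₁,x₂]`. -/
lemma KJ.prime_X1 : Prime (X 1 : R3) := by
  have e1 := (MulEquiv.prime_iff (p := (X 1 : R3)) (renameEquiv ℝ (Equiv.swap (0 : Fin 3) 1)).toMulEquiv).symm
  have e2 := (MulEquiv.prime_iff (p := (X 0 : R3)) (finSuccEquiv ℝ 2).toMulEquiv).symm
  rw [e1]
  have h1 : (renameEquiv ℝ (Equiv.swap (0 : Fin 3) 1)).toMulEquiv (X 1 : R3) = (X 0 : R3) := by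
    simp [renameEquiv_apply, rename_X]
  rw [h1, e2]
  have h2 : (finSuccEquiv ℝ 2).toMulEquiv (X 0 : R3) = Polynomial.X := by
    simp [finSuccEquiv_X_zero]
  rw [h2]
  exact Polynomial.prime_X

/-- Any linear form with nonzero `X 1`-coefficient is prime. -/
lemma KJ.prime_lin {a b d : ℝ} (ha : a ≠ 0) :
    Prime (C b * X 0 + C a * X 1 + C d * X 2 : R3) := by
  have hCa : (C a * C a⁻¹ : R3) = 1 := by rw [← C_mul, mul_inv_cancel₀ ha, C_1]
  have hfg : ∀ i, aeval (![X 0, C b * X 0 + C a * X 1 + C d * X 2, X 2] : Fin 3 → R3)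
      ((![X 0, C a⁻¹ * (X 1 - C b * X 0 - C d * X 2), X 2] : Fin 3 → R3) i) = X i := by
    intro i; fin_cases i
    · simp
    · simp
      linear_combination (X 1 : R3) * hCa
    · simp
  have hgf : ∀ i, aeval (![X 0, C a⁻¹ * (X 1 - C b * X 0 - C d * X 2), X 2] : Fin 3 → R3)
      ((![X 0, C b * X 0 + C a * X 1 + C d * X 2, X 2] : Fin 3 → R3) i) = X i := by
    intro i; fin_cases i
    · simp
    · simp
      linear_combination (X 1 - C b * X 0 - C d * X 2 : R3) * hCa
    · simp
  let e : R3 ≃ₐ[ℝ] R3 := AlgEquiv.ofAlgHom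
    (aeval (![X 0, C b * X 0 + C a * X 1 + C d * X 2, X 2] : Fin 3 → R3))
    (aeval (![X 0, C a⁻¹ * (X 1 - C b * X 0 - C d * X 2), X 2] : Fin 3 → R3))
    (algHom_ext fun i => by simpa using hfg i)
    (algHom_ext fun i => by simpa using hgf i)
  have hp := (MulEquiv.prime_iff (p := (X 1 : R3)) e.toMulEquiv).symm.mp KJ.prime_X1
  have h1 : e.toMulEquiv (X 1 : R3) = C b * X 0 + C a * X 1 + C d * X 2 := by
    show aeval _ (X (1 : Fin 3)) = _
    simp
  rwa [h1] at hp

/-- Scaling all variables by `q` on a homogeneous polynomial of degree `n`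
multiplies it by `q ^ n`. -/
lemma KJ.aeval_qX {q F : R3} {n : ℕ} (hF : F.IsHomogeneous n) :
    aeval (fun i => q * X i) F = q ^ n * F := by
  conv_lhs => rw [F.as_sum]
  rw [map_sum]
  conv_rhs => rw [F.as_sum, Finset.mul_sum]
  refine Finset.sum_congr rfl fun m hm => ?_
  have hdeg : ∑ i ∈ m.support, m i = n := by
    have := hF (mem_support_iff.mp hm)
    simpa [Finsupp.weight_apply, Finsupp.sum, Finsupp.degree] using this
  rw [aeval_monomial, monomial_eq, algebraMap_eq, Finsupp.prod, Finsupp.prod]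
  simp_rw [mul_pow]
  rw [Finset.prod_mul_distrib, Finset.prod_pow_eq_pow_sum, hdeg]
  ring

/-- If two homogeneous polynomials of the same degree differ by a polynomial
factor, that factor can be taken constant. -/
lemma KJ.hom_factor {d : ℕ} {p q s : R3} (hp : p.IsHomogeneous d) (hq : q.IsHomogeneous d)
    (h : p = q * s) : p = q * C (coeff 0 s) := by
  have hcomp : homogeneousComponent d p = p := by
    rw [homogeneousComponent_of_mem ((mem_homogeneousSubmodule _ _).mpr hp)]
    simp
  have hs : s = ∑ i ∈ Finset.range (s.totalDegree + 1), homogeneousComponent i s :=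
    (sum_homogeneousComponent s).symm
  have key : p = ∑ i ∈ Finset.range (s.totalDegree + 1),
      homogeneousComponent d (q * homogeneousComponent i s) := by
    conv_lhs => rw [← hcomp, h, hs]
    rw [Finset.mul_sum, map_sum]
  have term : ∀ i ∈ Finset.range (s.totalDegree + 1),
      homogeneousComponent d (q * homogeneousComponent i s)
        = if i = 0 then q * homogeneousComponent 0 s else 0 := by
    intro i _
    have hmem : q * homogeneousComponent i s ∈ homogeneousSubmodule (Fin 3) ℝ (d + i) :=
      ((mem_homogeneousSubmodule _ _).mpr) (hq.mul (homogeneousComponent_isHomogeneous i s))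
    rw [homogeneousComponent_of_mem hmem]
    by_cases hi : i = 0
    · subst hi; simp
    · have : ¬ (d + i = d) := by omega
      simp [this, hi]
  rw [Finset.sum_congr rfl term, Finset.sum_ite_eq' _ 0 _] at key
  simp only [Finset.mem_range, Nat.succ_pos, if_pos (Nat.succ_le_succ (Nat.zero_le _))] at key
  rw [key]
  simp [homogeneousComponent_zero]

/-- `Δ_k = −4j₀ + 2(2k+1)j₁ + 4j₂`. -/
def KJΔp (k : ℝ) : R3 := C (-4) * X 0 + C (2 * (2 * k + 1)) * X 1 + C 4 * X 2

/-- `Δ̄_k = −4j₀ − 2(2k+1)j₁ + 4j₂`. -/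
def KJΔm (k : ℝ) : R3 := C (-4) * X 0 - C (2 * (2 * k + 1)) * X 1 + C 4 * X 2

/-- The explicit quadratic inverse triple of `g*(k)`. -/
def KJGhat (k : ℝ) : Fin 3 → R3 := ![Γ k * KJΔp k, Γbar k * KJΔm k, Γ k * Γbar k]

/-- Multiplier of the reverse composition. -/
def KJnu (k : ℝ) : R3 :=
  C (16 * (2 * k + 1)) * (Γ k * (Γbar k * (C (k + 1) * X 0 + C k * X 2)))

/-- Multiplier of the forward composition. -/
def KJmu (k : ℝ) : R3 :=
  C (4 * (2 * k + 1) ^ 2) *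
    (X 2 * ((C 2 * X 2 + C (k * (k + 1)) * X 0) * (C 2 * X 2 + C (k * (k + 1)) * X 1)))

lemma KJ.Ghat0 (k : ℝ) : KJGhat k 0 = Γ k * KJΔp k := rfl
lemma KJ.Ghat1 (k : ℝ) : KJGhat k 1 = Γbar k * KJΔm k := rfl
lemma KJ.Ghat2 (k : ℝ) : KJGhat k 2 = Γ k * Γbar k := rfl

lemma KJ.hrev (k : ℝ) : ∀ i, aeval (KJGhat k) (gstar k i) = KJnu k * X i := by
  intro i
  apply MvPolynomial.funext
  intro x
  fin_cases i <;>
    simp [gstar, KJGhat, u, v, w, Γ, Γbar, KJΔp, KJΔm, KJnu, algebraMap_eq] <;> ring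

lemma KJ.hfwd (k : ℝ) : ∀ i, aeval (gstar k) (KJGhat k i) = KJmu k * X i := by
  intro i
  apply MvPolynomial.funext
  intro x
  fin_cases i <;>
    simp [gstar, KJGhat, u, v, w, Γ, Γbar, KJΔp, KJΔm, KJmu, algebraMap_eq] <;> ring

lemma KJ.nu_ne (k : ℝ) (hk2 : 2 * k + 1 ≠ 0) : KJnu k ≠ 0 := by
  intro h0
  have he : eval (![1, 0, 1] : Fin 3 → ℝ) (KJnu k) = 256 * (2 * k + 1) ^ 4 := by
    simp [KJnu, Γ, Γbar]
    ring
  rw [h0] at he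
  simp only [map_zero] at he
  have h4 : (2 * k + 1) ^ 4 = 0 := by linarith
  exact hk2 (pow_eq_zero_iff (n := 4) (by norm_num) |>.mp h4)

lemma KJ.mu_ne (k : ℝ) (hk2 : 2 * k + 1 ≠ 0) : KJmu k ≠ 0 := by
  intro h0
  have he : eval (![0, 0, 1] : Fin 3 → ℝ) (KJmu k) = 16 * (2 * k + 1) ^ 2 := by
    simp [KJmu]
    ring
  rw [h0] at he
  simp only [map_zero] at he
  have h4 : (2 * k + 1) ^ 2 = 0 := by linarith
  exact hk2 (pow_eq_zero_iff (n := 2) (by norm_num) |>.mp h4)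

lemma KJ.gstar_inj (k : ℝ) (hnu : KJnu k ≠ 0) {F : R3} {n : ℕ} (hF : F.IsHomogeneous n)
    (h : aeval (gstar k) F = 0) : F = 0 := by
  have hc : aeval (KJGhat k) (aeval (gstar k) F)
      = aeval (fun i => aeval (KJGhat k) (gstar k i)) F := bind₁_bind₁ _ _ _
  rw [h, map_zero] at hc
  have hfun : (fun i => aeval (KJGhat k) (gstar k i)) = fun i => KJnu k * X i := by
    funext i; exact KJ.hrev k i
  rw [hfun, KJ.aeval_qX hF] at hc
  rcases mul_eq_zero.mp hc.symm with h1 | h2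
  · exact absurd (pow_eq_zero_iff'.mp h1).1 hnu
  · exact h2

lemma KJ.cross (k : ℝ) (hnu : KJnu k ≠ 0) {P Q : Fin 3 → R3} {μP μQ : R3}
    (hP : ∀ i, (P i).IsHomogeneous 2) (hQ : ∀ i, (Q i).IsHomogeneous 2)
    (hiP : ∀ i, aeval (gstar k) (P i) = μP * X i)
    (hiQ : ∀ i, aeval (gstar k) (Q i) = μQ * X i) :
    ∀ i j, P i * Q j = Q i * P j := by
  intro i j
  have h0 : aeval (gstar k) (P i * Q j - Q i * P j) = 0 := by
    rw [map_sub, map_mul, map_mul, hiP i, hiQ j, hiQ i, hiP j]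
    ring
  have hh : (P i * Q j - Q i * P j).IsHomogeneous 4 :=
    ((hP i).mul (hQ j)).sub ((hQ i).mul (hP j))
  exact sub_eq_zero.mp (KJ.gstar_inj k hnu hh h0)

lemma KJ.Γ_hom (k : ℝ) : (Γ k).IsHomogeneous 1 :=
  ((isHomogeneous_C_mul_X _ _).add (isHomogeneous_C_mul_X _ _)).sub (isHomogeneous_C_mul_X _ _)

lemma KJ.Γbar_hom (k : ℝ) : (Γbar k).IsHomogeneous 1 :=
  ((isHomogeneous_C_mul_X _ _).sub (isHomogeneous_C_mul_X _ _)).sub (isHomogeneous_C_mul_X _ _)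

lemma KJ.Δp_hom (k : ℝ) : (KJΔp k).IsHomogeneous 1 :=
  ((isHomogeneous_C_mul_X _ _).add (isHomogeneous_C_mul_X _ _)).add (isHomogeneous_C_mul_X _ _)

lemma KJ.Δm_hom (k : ℝ) : (KJΔm k).IsHomogeneous 1 :=
  ((isHomogeneous_C_mul_X _ _).sub (isHomogeneous_C_mul_X _ _)).add (isHomogeneous_C_mul_X _ _)

lemma KJ.Ghat_hom (k : ℝ) : ∀ i, (KJGhat k i).IsHomogeneous 2 := by
  intro i
  fin_cases i
  · exact (KJ.Γ_hom k).mul (KJ.Δp_hom k)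
  · exact (KJ.Γbar_hom k).mul (KJ.Δm_hom k)
  · exact (KJ.Γ_hom k).mul (KJ.Γbar_hom k)

lemma KJ.prime_Γ (k : ℝ) (hk0 : k ≠ 0) (hk1 : k + 1 ≠ 0) (hk2 : 2 * k + 1 ≠ 0) :
    Prime (Γ k) := by
  have hform : Γ k = C (2 * (k + 1) * (k + 2)) * X 0 + C (k * (k + 1) * (2 * k + 1)) * X 1
      + C (-(2 * (k - 1) * k)) * X 2 := by
    rw [Γ, map_neg]
    ring
  rw [hform]
  exact KJ.prime_lin (mul_ne_zero (mul_ne_zero hk0 hk1) hk2)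

lemma KJ.prime_Γbar (k : ℝ) (hk0 : k ≠ 0) (hk1 : k + 1 ≠ 0) (hk2 : 2 * k + 1 ≠ 0) :
    Prime (Γbar k) := by
  have hform : Γbar k = C (2 * (k + 1) * (k + 2)) * X 0 + C (-(k * (k + 1) * (2 * k + 1))) * X 1
      + C (-(2 * (k - 1) * k)) * X 2 := by
    rw [Γbar, map_neg, map_neg]
    ring
  rw [hform]
  exact KJ.prime_lin (neg_ne_zero.mpr (mul_ne_zero (mul_ne_zero hk0 hk1) hk2))

lemma KJ.not_dvd_Γbar_Δp (k : ℝ) (hk1 : k + 1 ≠ 0) (hk2 : 2 * k + 1 ≠ 0) :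
    ¬ Γbar k ∣ KJΔp k := by
  rintro ⟨t, ht⟩
  have h1 : eval (![k * (k + 1) * (2 * k + 1), 2 * (k + 1) * (k + 2), 0] : Fin 3 → ℝ)
      (KJΔp k) = 8 * (k + 1) * (2 * k + 1) := by
    simp [KJΔp]
    ring
  have h2 : eval (![k * (k + 1) * (2 * k + 1), 2 * (k + 1) * (k + 2), 0] : Fin 3 → ℝ)
      (Γbar k) = 0 := by
    simp [Γbar]
    ring
  have h3 := congrArg (eval (![k * (k + 1) * (2 * k + 1), 2 * (k + 1) * (k + 2), 0] : Fin 3 → ℝ)) ht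
  rw [eval_mul, h2, zero_mul, h1] at h3
  exact (mul_ne_zero (mul_ne_zero (by norm_num) hk1) hk2) h3

lemma KJ.not_dvd_Γ_Δm (k : ℝ) (hk1 : k + 1 ≠ 0) (hk2 : 2 * k + 1 ≠ 0) :
    ¬ Γ k ∣ KJΔm k := by
  rintro ⟨t, ht⟩
  have h1 : eval (![k * (k + 1) * (2 * k + 1), -(2 * (k + 1) * (k + 2)), 0] : Fin 3 → ℝ)
      (KJΔm k) = 8 * (k + 1) * (2 * k + 1) := by
    simp [KJΔm]
    ring
  have h2 : eval (![k * (k + 1) * (2 * k + 1), -(2 * (k + 1) * (k + 2)), 0] : Fin 3 → ℝ)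
      (Γ k) = 0 := by
    simp [Γ]
    ring
  have h3 := congrArg
    (eval (![k * (k + 1) * (2 * k + 1), -(2 * (k + 1) * (k + 2)), 0] : Fin 3 → ℝ)) ht
  rw [eval_mul, h2, zero_mul, h1] at h3
  exact (mul_ne_zero (mul_ne_zero (by norm_num) hk1) hk2) h3

lemma KJ.not_dvd_Γ_Γbar (k : ℝ) (hk0 : k ≠ 0) (hk1 : k + 1 ≠ 0) (hk2 : 2 * k + 1 ≠ 0) :
    ¬ Γ k ∣ Γbar k := by
  rintro ⟨t, ht⟩
  have ha1 : eval (![k * (k + 1) * (2 * k + 1), -(2 * (k + 1) * (k + 2)), 0] : Fin 3 → ℝ)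
      (Γbar k) = 4 * k * (k + 1) ^ 2 * (2 * k + 1) * (k + 2) := by
    simp [Γbar]
    ring
  have ha2 : eval (![k * (k + 1) * (2 * k + 1), -(2 * (k + 1) * (k + 2)), 0] : Fin 3 → ℝ)
      (Γ k) = 0 := by
    simp [Γ]
    ring
  have hb1 : eval (![0, 2 * (k - 1) * k, k * (k + 1) * (2 * k + 1)] : Fin 3 → ℝ)
      (Γbar k) = -(4 * k ^ 2 * (k + 1) * (2 * k + 1)) * (k - 1) := by
    simp [Γbar]
    ring
  have hb2 : eval (![0, 2 * (k - 1) * k, k * (k + 1) * (2 * k + 1)] : Fin 3 → ℝ)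
      (Γ k) = 0 := by
    simp [Γ]
    ring
  have e1 := congrArg
    (eval (![k * (k + 1) * (2 * k + 1), -(2 * (k + 1) * (k + 2)), 0] : Fin 3 → ℝ)) ht
  rw [eval_mul, ha2, zero_mul, ha1] at e1
  have e2 := congrArg
    (eval (![0, 2 * (k - 1) * k, k * (k + 1) * (2 * k + 1)] : Fin 3 → ℝ)) ht
  rw [eval_mul, hb2, zero_mul, hb1] at e2
  have hcoef : (4 : ℝ) * k * (k + 1) ^ 2 * (2 * k + 1) ≠ 0 :=
    mul_ne_zero (mul_ne_zero (mul_ne_zero (by norm_num) hk0) (pow_ne_zero 2 hk1)) hk2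
  have hcoef2 : -((4 : ℝ) * k ^ 2 * (k + 1) * (2 * k + 1)) ≠ 0 := by
    refine neg_ne_zero.mpr ?_
    exact mul_ne_zero (mul_ne_zero (mul_ne_zero (by norm_num) (pow_ne_zero 2 hk0)) hk1) hk2
  have hA : k + 2 = 0 := by
    by_contra hne
    exact (mul_ne_zero hcoef hne) e1
  have hB : k - 1 = 0 := by
    by_contra hne
    exact (mul_ne_zero hcoef2 hne) e2
  linarith

/-- Any quadratic inverse triple of `g*(k)` is a scalar multiple of `KJGhat k`. -/
lemma KJ.key (k : ℝ) (hk0 : k ≠ 0) (hk1 : k + 1 ≠ 0) (hk2 : 2 * k + 1 ≠ 0)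
    {P : Fin 3 → R3} {μP : R3}
    (hPh : ∀ i, (P i).IsHomogeneous 2) (hμP : μP ≠ 0)
    (hiP : ∀ i, aeval (gstar k) (P i) = μP * X i) :
    ∃ c : ℝ, c ≠ 0 ∧ ∀ i, P i = C c * KJGhat k i := by
  have hnu := KJ.nu_ne k hk2
  have pΓ := KJ.prime_Γ k hk0 hk1 hk2
  have pΓb := KJ.prime_Γbar k hk0 hk1 hk2
  have hΓ0 : Γ k ≠ 0 := pΓ.ne_zero
  have hΓb0 : Γbar k ≠ 0 := pΓb.ne_zero
  have hcr := KJ.cross k hnu hPh (KJ.Ghat_hom k) hiP (KJ.hfwd k)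
  have h02 := hcr 0 2
  have h12 := hcr 1 2
  rw [KJ.Ghat0, KJ.Ghat2] at h02
  rw [KJ.Ghat1, KJ.Ghat2] at h12
  have e0 : P 0 * Γbar k = KJΔp k * P 2 := by
    apply mul_left_cancel₀ hΓ0
    linear_combination h02
  have e1 : P 1 * Γ k = KJΔm k * P 2 := by
    apply mul_left_cancel₀ hΓb0
    linear_combination h12
  have hd1 : Γbar k ∣ KJΔp k * P 2 := ⟨P 0, by linear_combination -e0⟩
  have hP2dvd : Γbar k ∣ P 2 := by
    rcases pΓb.2.2 _ _ hd1 with hc | hc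
    · exact absurd hc (KJ.not_dvd_Γbar_Δp k hk1 hk2)
    · exact hc
  obtain ⟨T, hT⟩ := hP2dvd
  have hd2 : Γ k ∣ KJΔm k * P 2 := ⟨P 1, by linear_combination -e1⟩
  have hTdvd : Γ k ∣ T := by
    rcases pΓ.2.2 _ _ hd2 with hc | hc
    · exact absurd hc (KJ.not_dvd_Γ_Δm k hk1 hk2)
    · rw [hT] at hc
      rcases pΓ.2.2 _ _ hc with hc' | hc'
      · exact absurd hc' (KJ.not_dvd_Γ_Γbar k hk0 hk1 hk2)
      · exact hc'
  obtain ⟨S, hS⟩ := hTdvd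
  have hfac : P 2 = (Γ k * Γbar k) * S := by
    rw [hT, hS]
    ring
  have hq2 : (Γ k * Γbar k).IsHomogeneous 2 := (KJ.Γ_hom k).mul (KJ.Γbar_hom k)
  have hP2 := KJ.hom_factor (hPh 2) hq2 hfac
  set c := coeff 0 S with hcdef
  have hP2ne : P 2 ≠ 0 := by
    intro h0
    have h1 := hiP 2
    rw [h0, map_zero] at h1
    exact (mul_ne_zero hμP (X_ne_zero 2)) h1.symm
  have hc : c ≠ 0 := by
    intro h0
    apply hP2ne
    rw [hP2, h0, C_0, mul_zero]
  have g0 : P 0 = C c * KJGhat k 0 := by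
    rw [KJ.Ghat0]
    apply mul_right_cancel₀ hΓb0
    linear_combination e0 + KJΔp k * hP2
  have g1 : P 1 = C c * KJGhat k 1 := by
    rw [KJ.Ghat1]
    apply mul_right_cancel₀ hΓ0
    linear_combination e1 + KJΔm k * hP2
  have g2 : P 2 = C c * KJGhat k 2 := by
    rw [KJ.Ghat2]
    linear_combination hP2
  refine ⟨c, hc, ?_⟩
  intro i
  fin_cases i
  · exact g0
  · exact g1
  · exact g2

end KJaux

open MvPolynomial in
/-- For `k ∉ {−1, −1/2, 0}`, any two quadratic inverse triples of `g*(k)` are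
proportional by a nonzero real constant. -/
theorem gstar_inverse_unique_up_to_scalar (k : ℝ)
    (hk : k ∉ ({-1, -1/2, 0} : Set ℝ))
    (G G' : Fin 3 → MvPolynomial (Fin 3) ℝ) (μ μ' : MvPolynomial (Fin 3) ℝ)
    (hG : ∀ i, (G i).IsHomogeneous 2) (hG' : ∀ i, (G' i).IsHomogeneous 2)
    (hμ : μ ≠ 0) (hμ3 : μ.IsHomogeneous 3)
    (hμ' : μ' ≠ 0) (hμ'3 : μ'.IsHomogeneous 3)
    (hinv : ∀ i : Fin 3, aeval (gstar k) (G i) = μ * X i)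
    (hinv' : ∀ i : Fin 3, aeval (gstar k) (G' i) = μ' * X i) :
    ∃ lam : ℝ, lam ≠ 0 ∧ ∀ i : Fin 3, G' i = C lam * G i := by
  simp only [Set.mem_insert_iff, Set.mem_singleton_iff, not_or] at hk
  obtain ⟨hkm1, hkh, hk0⟩ := hk
  have hk1 : k + 1 ≠ 0 := fun h => hkm1 (by linarith)
  have hk2 : 2 * k + 1 ≠ 0 := fun h => hkh (by linarith)
  obtain ⟨c, hc, hGc⟩ := KJ.key k hk0 hk1 hk2 hG hμ hinv
  obtain ⟨c', hc', hG'c⟩ := KJ.key k hk0 hk1 hk2 hG' hμ' hinv'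
  refine ⟨c' / c, div_ne_zero hc' hc, fun i => ?_⟩
  rw [hG'c i, hGc i, ← mul_assoc, ← C_mul, div_mul_cancel₀ _ hc]
end
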